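/- For fixed α ∈ (0, 1/2), ∫_0^∞ e^{−αt} |L_n^{(1)}(t)| dt ∼ ((1−α)/α)^{n+1} as n → ∞; in particular the ratio of the integral to ((1−α)/α)^{n+1} tends to 1. -/

import Mathlib

open Filter Topology MeasureTheory

noncomputable section

/-- The generalised Laguerre polynomial `L_n^{(1)}`. -/
def lag (n : ℕ) (t : ℝ) : ℝ :=
  ∑ k ∈ Finset.range (n + 1),
    ((n + 1).choose (k + 1) : ℝ) * (-1) ^ k / (Nat.factorial k : ℝ) * t ^ k

open Set Finset Polynomial Real


lemma integrableOn_pow_mul_exp (b : ℝ) (hb : 0 < b) (k : ℕ) :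
    IntegrableOn (fun t : ℝ => t ^ k * Real.exp (-(b * t))) (Ioi 0) := by
  have h := integrableOn_rpow_mul_exp_neg_mul_rpow (p := 1) (s := (k : ℝ)) (b := b)
    (by exact_mod_cast neg_one_lt_zero.trans_le (Nat.cast_nonneg k)) one_pos hb
  refine h.congr_fun (fun t ht => ?_) measurableSet_Ioi
  dsimp only
  rw [Real.rpow_one, Real.rpow_natCast, neg_mul]

lemma integral_pow_mul_exp (b : ℝ) (hb : 0 < b) (k : ℕ) :
    ∫ t in Ioi (0:ℝ), t ^ k * Real.exp (-(b * t)) = (k.factorial : ℝ) / b ^ (k + 1) := by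
  have h := Real.integral_rpow_mul_exp_neg_mul_Ioi (a := (k : ℝ) + 1) (r := b)
    (by positivity) hb
  rw [show ((k : ℝ) + 1 - 1) = (k : ℝ) by ring] at h
  have : ∫ t in Ioi (0:ℝ), t ^ k * Real.exp (-(b * t))
      = ∫ t in Ioi (0:ℝ), t ^ ((k : ℝ)) * Real.exp (-(b * t)) := by
    refine setIntegral_congr_fun measurableSet_Ioi (fun t ht => ?_)
    rw [Real.rpow_natCast]
  rw [this, h]
  rw [Real.Gamma_nat_eq_factorial,
    show ((k:ℝ)+1) = ((k+1 : ℕ) : ℝ) by push_cast; ring, Real.rpow_natCast, one_div, inv_pow]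
  field_simp


def Tsum (m d : ℕ) : ℝ := ∑ i ∈ range (m + 1), (-1) ^ i * (m.choose i : ℝ) * (i : ℝ) ^ d

lemma Tsum_rec (m d : ℕ) :
    Tsum (m + 1) d = Tsum m d
      - ∑ u ∈ range (m + 1), (-1) ^ u * (m.choose u : ℝ) * ((u : ℝ) + 1) ^ d := by
  set g : ℕ → ℝ := fun i => (-1) ^ i * (m.choose i : ℝ) * (i : ℝ) ^ d with hg
  set f : ℕ → ℝ := fun i => (-1) ^ i * ((m+1).choose i : ℝ) * (i : ℝ) ^ d with hf
  have step1 : Tsum (m+1) d = ∑ u ∈ range (m + 1), f (u+1) + f 0 :=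
    Finset.sum_range_succ' f (m+1)
  have step2 : ∀ u ∈ range (m+1),
      f (u+1) = g (u+1) - (-1) ^ u * (m.choose u : ℝ) * ((u : ℝ) + 1) ^ d := by
    intro u _
    simp only [hf, hg]
    rw [Nat.choose_succ_succ]
    push_cast
    ring
  have step3 : ∑ u ∈ range (m+1), g (u+1) = Tsum m d - g 0 := by
    have := Finset.sum_range_succ' g (m+1)
    have h2 : ∑ i ∈ range (m+2), g i = Tsum m d + g (m+1) := Finset.sum_range_succ g (m+1)
    have h3 : g (m+1) = 0 := by simp [hg, Nat.choose_succ_self]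
    rw [h3, add_zero] at h2
    linarith [this, h2]
  have f0g0 : f 0 = g 0 := by simp [hf, hg]
  rw [step1, Finset.sum_congr rfl step2, Finset.sum_sub_distrib, step3, f0g0]
  ring

lemma Tsum_main (m : ℕ) : (∀ d < m, Tsum m d = 0) ∧ Tsum m m = (-1) ^ m * (m.factorial : ℝ) := by
  induction m with
  | zero => exact ⟨fun d hd => absurd hd (Nat.not_lt_zero d), by simp [Tsum]⟩
  | succ m ih =>
    have expand : ∀ d : ℕ, Tsum (m+1) d = -∑ e ∈ range d, (d.choose e : ℝ) * Tsum m e := by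
      intro d
      rw [Tsum_rec]
      have : ∀ u ∈ range (m+1), (-1:ℝ) ^ u * (m.choose u : ℝ) * ((u : ℝ) + 1) ^ d
          = ∑ e ∈ range (d+1), (d.choose e : ℝ) * ((-1:ℝ)^u * (m.choose u : ℝ) * (u:ℝ)^e) := by
        intro u _
        rw [add_pow, Finset.mul_sum]
        refine Finset.sum_congr rfl fun e _ => ?_
        ring
      rw [Finset.sum_congr rfl this, Finset.sum_comm]
      have swap : ∀ e, ∑ u ∈ range (m+1), (d.choose e : ℝ) * ((-1:ℝ)^u * (m.choose u : ℝ) * (u:ℝ)^e)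
          = (d.choose e : ℝ) * Tsum m e := by
        intro e; rw [Tsum, Finset.mul_sum]
      simp only [swap]
      rw [Finset.sum_range_succ, Nat.choose_self]
      push_cast
      ring
    constructor
    · intro d hd
      rw [expand d]
      have : ∀ e ∈ range d, (d.choose e : ℝ) * Tsum m e = 0 := by
        intro e he
        rw [ih.1 e (lt_of_lt_of_le (Finset.mem_range.mp he) (by omega)), mul_zero]
      rw [Finset.sum_congr rfl this]
      simp
    · rw [expand (m+1)]
      rw [Finset.sum_range_succ]
      have : ∀ e ∈ range m, ((m+1).choose e : ℝ) * Tsum m e = 0 := by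
        intro e he
        rw [ih.1 e (Finset.mem_range.mp he), mul_zero]
      rw [Finset.sum_congr rfl this, ih.2]
      simp [Nat.choose_succ_self_right, Nat.factorial_succ]
      push_cast
      ring


lemma fact_ratio (k j : ℕ) :
    ((k + j + 1).factorial : ℝ) = (k.factorial : ℝ) * ∏ l ∈ range (j+1), ((k : ℝ) + 1 + l) := by
  induction j with
  | zero => simp [Nat.factorial_succ]; push_cast; ring
  | succ j ih =>
    rw [Finset.prod_range_succ, ← mul_assoc, ← ih,
      show k + (j+1) + 1 = (k + j + 1) + 1 by ring, Nat.factorial_succ]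
    push_cast
    ring

lemma Vsum (n j : ℕ) (hj : j ≤ n) :
    ∑ k ∈ range (n+1), (-1:ℝ)^k * ((n+1).choose (k+1) : ℝ) * (((k+j+1).factorial : ℝ) / (k.factorial : ℝ))
      = if j = n then (-1)^n * ((n+1).factorial : ℝ) else 0 := by
  set P : Polynomial ℝ := ∏ l ∈ range (j+1), (X + C (l : ℝ)) with hP
  have hmonic : P.Monic := monic_prod_of_monic _ _ fun l _ => monic_X_add_C _
  have hdeg : P.natDegree = j + 1 := by
    rw [hP, natDegree_prod _ _ (fun (l : ℕ) (_ : l ∈ range (j+1)) => (monic_X_add_C ((l:ℝ))).ne_zero),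
      Finset.sum_congr rfl (fun (l : ℕ) (_ : l ∈ range (j+1)) => natDegree_X_add_C (l:ℝ)),
      Finset.sum_const, Finset.card_range, smul_eq_mul, mul_one]
  have heval : ∀ x : ℝ, P.eval x = ∏ l ∈ range (j+1), (x + l) := by
    intro x; rw [hP, eval_prod]; simp
  have hterm : ∀ k : ℕ, (((k+j+1).factorial : ℝ) / (k.factorial : ℝ)) = P.eval ((k : ℝ) + 1) := by
    intro k
    have hkf : (k.factorial : ℝ) ≠ 0 := by exact_mod_cast (Nat.factorial_pos k).ne'
    rw [heval, fact_ratio k j, mul_comm, mul_div_assoc, div_self hkf, mul_one]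
  set F : ℕ → ℝ := fun i => (-1)^i * ((n+1).choose i : ℝ) * P.eval (i : ℝ) with hF
  have hΦ : ∑ i ∈ range (n+2), F i
      = ∑ d ∈ range (j+2), P.coeff d * Tsum (n+1) d := by
    have : ∀ i ∈ range (n+2), F i
        = ∑ d ∈ range (j+2), P.coeff d * ((-1:ℝ)^i * ((n+1).choose i : ℝ) * (i:ℝ)^d) := by
      intro i _
      rw [hF]
      simp only
      rw [eval_eq_sum_range, hdeg, Finset.mul_sum]
      refine Finset.sum_congr rfl fun d _ => by ring
    rw [Finset.sum_congr rfl this, Finset.sum_comm]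
    refine Finset.sum_congr rfl fun d _ => ?_
    rw [Tsum, Finset.mul_sum]
  have hsum : ∑ k ∈ range (n+1), (-1:ℝ)^k * ((n+1).choose (k+1) : ℝ) * (((k+j+1).factorial : ℝ) / (k.factorial : ℝ))
      = -∑ i ∈ range (n+2), F i := by
    rw [Finset.sum_range_succ' F (n+1)]
    have hF0 : F 0 = 0 := by
      simp [hF, heval, Finset.prod_range_succ']
    rw [hF0, add_zero, ← Finset.sum_neg_distrib]
    refine Finset.sum_congr rfl fun k _ => ?_
    rw [hterm, hF]
    push_cast
    ring
  rw [hsum, hΦ]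
  rcases eq_or_lt_of_le hj with rfl | hlt
  · rw [Finset.sum_range_succ]
    have hz : ∀ d ∈ range (j+1), P.coeff d * Tsum (j+1) d = 0 := by
      intro d hd
      rw [(Tsum_main (j+1)).1 d (Finset.mem_range.mp hd), mul_zero]
    rw [Finset.sum_congr rfl hz, Finset.sum_const_zero, zero_add,
      show P.coeff (j+1) = 1 from hdeg ▸ hmonic.coeff_natDegree, (Tsum_main (j+1)).2]
    rw [if_pos rfl, pow_succ]
    ring
  · have hz : ∀ d ∈ range (j+2), P.coeff d * Tsum (n+1) d = 0 := by
      intro d hd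
      rw [(Tsum_main (n+1)).1 d (by have := Finset.mem_range.mp hd; omega), mul_zero]
    rw [Finset.sum_congr rfl hz, Finset.sum_const_zero]
    simp [Nat.ne_of_lt hlt]


def dd (n k : ℕ) : ℝ := ((n + 1).choose (k + 1) : ℝ) * (-1) ^ k / (Nat.factorial k : ℝ)

lemma lag_eq (n : ℕ) (t : ℝ) : lag n t = ∑ k ∈ range (n+1), dd n k * t ^ k := rfl

lemma dd_zero (n k : ℕ) (h : n < k) : dd n k = 0 := by
  rw [dd, Nat.choose_eq_zero_of_lt (by omega)]
  simp

lemma lag_eq_sum (n N : ℕ) (h : n + 1 ≤ N) (t : ℝ) :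
    lag n t = ∑ k ∈ range N, dd n k * t ^ k := by
  rw [lag_eq]
  refine Finset.sum_subset (Finset.range_subset_range.mpr h) (fun k hk hk' => ?_)
  rw [dd_zero n k (by simp at hk'; omega), zero_mul]

lemma choose_helper (m κ : ℕ) :
    (m+1) * Nat.choose (m+1) κ = (m+1) * Nat.choose m κ + κ * Nat.choose (m+1) κ := by
  rcases le_or_gt κ (m+1) with h | h
  · have h1 := Nat.choose_mul_succ_eq m κ
    calc (m+1) * Nat.choose (m+1) κ = ((m+1-κ) + κ) * Nat.choose (m+1) κ := by
          rw [Nat.sub_add_cancel h]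
      _ = Nat.choose (m+1) κ * (m+1-κ) + κ * Nat.choose (m+1) κ := by ring
      _ = Nat.choose m κ * (m+1) + κ * Nat.choose (m+1) κ := by rw [h1]
      _ = (m+1) * Nat.choose m κ + κ * Nat.choose (m+1) κ := by ring
  · rw [Nat.choose_eq_zero_of_lt h, Nat.choose_eq_zero_of_lt (by omega)]
    simp

lemma coeffid (n k : ℕ) :
    ((n:ℝ)+2) * ((n+3).choose (k+2) : ℝ) + ((n:ℝ)+2) * ((n+1).choose (k+2) : ℝ)
      = (2*(n:ℝ)+4) * ((n+2).choose (k+2) : ℝ) + ((k:ℝ)+1) * ((n+2).choose (k+1) : ℝ) := by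
  have p1 : ((n+3).choose (k+2) : ℝ) = ((n+2).choose (k+1) : ℝ) + ((n+2).choose (k+2) : ℝ) := by
    rw [show n+3 = (n+2)+1 from rfl, show k+2 = (k+1)+1 from rfl, Nat.choose_succ_succ]
    push_cast; ring
  have p2 : ((n+2).choose (k+2) : ℝ) = ((n+1).choose (k+1) : ℝ) + ((n+1).choose (k+2) : ℝ) := by
    rw [show n+2 = (n+1)+1 from rfl, show k+2 = (k+1)+1 from rfl, Nat.choose_succ_succ]
    push_cast; ring
  have h := choose_helper (n+1) (k+1)
  have h' : ((n:ℝ)+2) * ((n+2).choose (k+1) : ℝ)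
      = ((n:ℝ)+2) * ((n+1).choose (k+1) : ℝ) + ((k:ℝ)+1) * ((n+2).choose (k+1) : ℝ) := by
    exact_mod_cast congrArg (Nat.cast : ℕ → ℝ) h
  linear_combination ((n:ℝ)+2)*p1 - ((n:ℝ)+2)*p2 + h'

lemma lag_rec (n : ℕ) (t : ℝ) :
    ((n:ℝ)+2) * lag (n+2) t = (2*(n:ℝ)+4 - t) * lag (n+1) t - ((n:ℝ)+2) * lag n t := by
  have e2 : lag (n+2) t = ∑ k ∈ range (n+4), dd (n+2) k * t ^ k := lag_eq_sum _ _ (by omega) t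
  have e1 : lag (n+1) t = ∑ k ∈ range (n+4), dd (n+1) k * t ^ k := lag_eq_sum _ _ (by omega) t
  have e0 : lag n t = ∑ k ∈ range (n+4), dd n k * t ^ k := lag_eq_sum _ _ (by omega) t
  set E : ℕ → ℝ := fun k => if k = 0 then 0 else dd (n+1) (k-1) with hE
  have hE0 : E 0 = 0 := by simp [hE]
  have hEs : ∀ k : ℕ, E (k+1) = dd (n+1) k := by intro k; simp [hE]
  have eshift : t * lag (n+1) t = ∑ k ∈ range (n+4), E k * t ^ k := by
    rw [Finset.sum_range_succ' (fun k => E k * t ^ k) (n+3)]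
    simp only [hEs, hE0, zero_mul, add_zero]
    rw [lag_eq_sum (n+1) (n+3) (by omega) t, Finset.mul_sum]
    refine Finset.sum_congr rfl fun k _ => by ring
  have key : ∀ k ∈ range (n+4),
      ((n:ℝ)+2) * (dd (n+2) k * t ^ k)
        = (2*(n:ℝ)+4) * (dd (n+1) k * t ^ k) - E k * t ^ k - ((n:ℝ)+2) * (dd n k * t ^ k) := by
    intro k _
    rcases k with _ | k
    · rw [hE0]
      simp only [dd]
      norm_num [Nat.choose_one_right]
      ring
    · rw [hEs]
      have hkf : (k.factorial : ℝ) ≠ 0 := by exact_mod_cast (Nat.factorial_pos k).ne'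
      have hk1 : ((k:ℝ) + 1) ≠ 0 := by positivity
      have hc := coeffid n k
      have hcoef : ((n:ℝ)+2) * dd (n+2) (k+1)
          = (2*(n:ℝ)+4) * dd (n+1) (k+1) - dd (n+1) k - ((n:ℝ)+2) * dd n (k+1) := by
        simp only [dd, Nat.factorial_succ, pow_succ]
        push_cast
        field_simp
        linear_combination (-1:ℝ) * hc
      linear_combination t ^ (k+1) * hcoef
  calc ((n:ℝ)+2) * lag (n+2) t
      = ∑ k ∈ range (n+4), ((n:ℝ)+2) * (dd (n+2) k * t ^ k) := by rw [e2, Finset.mul_sum]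
    _ = ∑ k ∈ range (n+4), ((2*(n:ℝ)+4) * (dd (n+1) k * t ^ k) - E k * t ^ k
          - ((n:ℝ)+2) * (dd n k * t ^ k)) := Finset.sum_congr rfl key
    _ = (2*(n:ℝ)+4) * lag (n+1) t - t * lag (n+1) t - ((n:ℝ)+2) * lag n t := by
        rw [Finset.sum_sub_distrib, Finset.sum_sub_distrib, ← Finset.mul_sum, ← Finset.mul_sum,
          ← e1, ← e0, ← eshift]
    _ = (2*(n:ℝ)+4 - t) * lag (n+1) t - ((n:ℝ)+2) * lag n t := by ring

lemma lag_sign (n : ℕ) :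
    (∀ t : ℝ, 4*((n:ℝ)+1) ≤ t → 0 < (-1)^n * lag n t) ∧
    (∀ t : ℝ, 4*((n:ℝ)+2) ≤ t → (-1)^n * lag n t ≤ (-1)^(n+1) * lag (n+1) t) := by
  induction n with
  | zero =>
    have h0 : ∀ t : ℝ, lag 0 t = 1 := by
      intro t; simp [lag]
    have h1 : ∀ t : ℝ, lag 1 t = 2 - t := by
      intro t
      rw [lag_eq]
      simp [Finset.sum_range_succ, dd, Nat.choose_one_right]
      ring
    constructor
    · intro t _; rw [h0]; norm_num
    · intro t ht; rw [h0, h1]; push_cast at ht ⊢; norm_num; linarith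
  | succ n ih =>
    have pos1 : ∀ t : ℝ, 4*((n:ℝ)+2) ≤ t → 0 < (-1)^(n+1) * lag (n+1) t := by
      intro t ht
      exact lt_of_lt_of_le (ih.1 t (by linarith)) (ih.2 t ht)
    have hcast : ((n+1 : ℕ) : ℝ) = (n:ℝ) + 1 := by push_cast; ring
    constructor
    · intro t ht; exact pos1 t (by rw [hcast] at ht; linarith)
    · intro t ht
      rw [hcast] at ht
      have hrec := lag_rec n t
      have h1 : 0 < (-1)^(n+1) * lag (n+1) t := pos1 t (by linarith)
      have h2 : (-1)^n * lag n t ≤ (-1)^(n+1) * lag (n+1) t := ih.2 t (by linarith)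
      have e : ((n:ℝ)+2) * ((-1)^(n+2) * lag (n+2) t)
          = (t - (2*(n:ℝ)+4)) * ((-1)^(n+1) * lag (n+1) t)
            - ((n:ℝ)+2) * ((-1)^n * lag n t) := by
        simp only [pow_succ]
        linear_combination ((-1:ℝ)^n) * hrec
      have hstep : ((n:ℝ)+2) * ((-1)^(n+1) * lag (n+1) t)
          ≤ ((n:ℝ)+2) * ((-1)^(n+2) * lag (n+2) t) := by
        rw [e]
        nlinarith [h1, h2, ht]
      have hn2 : (0:ℝ) < (n:ℝ)+2 := by positivity
      have := (mul_le_mul_iff_right₀ hn2).mp hstep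
      exact this




lemma lag_continuous (n : ℕ) : Continuous (lag n) := by
  unfold lag
  exact continuous_finset_sum _ fun k _ => (continuous_const.mul (continuous_pow k))

lemma lag_abs_le (n : ℕ) (t : ℝ) (ht : 0 ≤ t) :
    |lag n t| ≤ ∑ k ∈ range (n+1), |dd n k| * t ^ k := by
  rw [lag_eq]
  refine (Finset.abs_sum_le_sum_abs _ _).trans (le_of_eq ?_)
  refine Finset.sum_congr rfl fun k _ => ?_
  rw [abs_mul, abs_pow, abs_of_nonneg ht]

lemma integrableOn_exp_mul_lag_abs (b : ℝ) (hb : 0 < b) (n : ℕ) :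
    IntegrableOn (fun t : ℝ => Real.exp (-(b * t)) * |lag n t|) (Ioi 0) := by
  have hg : IntegrableOn (fun t : ℝ => ∑ k ∈ range (n+1), |dd n k| * (t ^ k * Real.exp (-(b * t)))) (Ioi 0) :=
    integrable_finset_sum _ fun k _ => (integrableOn_pow_mul_exp b hb k).const_mul _
  refine hg.mono' ?_ ?_
  · exact ((Real.continuous_exp.comp (continuous_const.mul continuous_id).neg).mul
      (lag_continuous n).abs).aestronglyMeasurable
  · filter_upwards [ae_restrict_mem measurableSet_Ioi] with t ht
    have ht' : (0:ℝ) ≤ t := le_of_lt ht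
    rw [Real.norm_eq_abs, abs_of_nonneg (by positivity)]
    calc Real.exp (-(b * t)) * |lag n t|
        ≤ Real.exp (-(b * t)) * ∑ k ∈ range (n+1), |dd n k| * t ^ k := by
          exact mul_le_mul_of_nonneg_left (lag_abs_le n t ht') (Real.exp_pos _).le
      _ = ∑ k ∈ range (n+1), |dd n k| * (t ^ k * Real.exp (-(b * t))) := by
          rw [Finset.mul_sum]; exact Finset.sum_congr rfl fun k _ => by ring

lemma integrableOn_exp_mul_lag (b : ℝ) (hb : 0 < b) (n : ℕ) :
    IntegrableOn (fun t : ℝ => Real.exp (-(b * t)) * lag n t) (Ioi 0) := by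
  refine (integrableOn_exp_mul_lag_abs b hb n).mono' ?_ ?_
  · exact ((Real.continuous_exp.comp (continuous_const.mul continuous_id).neg).mul
      (lag_continuous n)).aestronglyMeasurable
  · filter_upwards with t
    rw [Real.norm_eq_abs, abs_mul, abs_of_nonneg (Real.exp_pos _).le]

lemma integrableOn_weight_lag_sq (n : ℕ) :
    IntegrableOn (fun t : ℝ => t * Real.exp (-t) * (lag n t)^2) (Ioi 0) := by
  have hg : IntegrableOn (fun t : ℝ => ∑ k ∈ range (n+1), ∑ j ∈ range (n+1),
      (|dd n k| * |dd n j|) * (t ^ (k+j+1) * Real.exp (-(1 * t)))) (Ioi 0) := by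
    refine integrable_finset_sum _ fun k _ => integrable_finset_sum _ fun j _ => ?_
    exact (integrableOn_pow_mul_exp 1 one_pos (k+j+1)).const_mul _
  refine hg.mono' ?_ ?_
  · refine ((continuous_id.mul (Real.continuous_exp.comp continuous_id.neg)).mul
      ((lag_continuous n).pow 2)).aestronglyMeasurable
  · filter_upwards [ae_restrict_mem measurableSet_Ioi] with t ht
    have ht' : (0:ℝ) ≤ t := le_of_lt ht
    rw [Real.norm_eq_abs, abs_mul, abs_mul, abs_of_nonneg ht', abs_of_nonneg (Real.exp_pos _).le,
      abs_pow]
    calc t * Real.exp (-t) * |lag n t| ^ 2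
        ≤ t * Real.exp (-t) * (∑ k ∈ range (n+1), |dd n k| * t ^ k) ^ 2 := by
          refine mul_le_mul_of_nonneg_left ?_ (by positivity)
          exact pow_le_pow_left₀ (abs_nonneg _) (lag_abs_le n t ht') 2
      _ = ∑ k ∈ range (n+1), ∑ j ∈ range (n+1),
            (|dd n k| * |dd n j|) * (t ^ (k+j+1) * Real.exp (-(1 * t))) := by
          rw [sq, Finset.sum_mul_sum, Finset.mul_sum]
          refine Finset.sum_congr rfl fun k _ => ?_
          rw [Finset.mul_sum]
          refine Finset.sum_congr rfl fun j _ => ?_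
          simp only [one_mul]
          ring

lemma integral_exp_lag {α : ℝ} (hα : 0 < α) (n : ℕ) :
    ∫ t in Ioi (0:ℝ), Real.exp (-(α*t)) * lag n t
      = 1 + (-1)^n * ((1-α)/α)^(n+1) := by
  have hα0 : α ≠ 0 := hα.ne'
  have hfun : (fun t : ℝ => Real.exp (-(α*t)) * lag n t)
      = fun t => ∑ k ∈ range (n+1), dd n k * (t^k * Real.exp (-(α*t))) := by
    funext t
    rw [lag_eq, Finset.mul_sum]
    exact Finset.sum_congr rfl fun k _ => by ring
  rw [hfun, integral_finset_sum _ (fun k _ => ((integrableOn_pow_mul_exp α hα k).const_mul _))]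
  have hval : ∀ k ∈ range (n+1),
      ∫ t in Ioi (0:ℝ), dd n k * (t^k * Real.exp (-(α*t)))
        = -(((n+1).choose (k+1) : ℝ) * (-1/α)^(k+1)) := by
    intro k _
    rw [MeasureTheory.integral_const_mul, integral_pow_mul_exp α hα k, dd]
    have hkf : (k.factorial : ℝ) ≠ 0 := by exact_mod_cast (Nat.factorial_pos k).ne'
    rw [div_pow, pow_succ, pow_succ]
    field_simp
  rw [Finset.sum_congr rfl hval]
  set x : ℝ := -1/α with hx
  have hbin : (x+1)^(n+1) = ∑ i ∈ range (n+2), x^i * ((n+1).choose i : ℝ) := by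
    rw [add_pow]
    exact Finset.sum_congr rfl fun i _ => by rw [one_pow, mul_one]
  rw [Finset.sum_range_succ' (fun i => x^i * ((n+1).choose i : ℝ)) (n+1)] at hbin
  have hsum : ∑ k ∈ range (n+1), -(((n+1).choose (k+1) : ℝ) * x^(k+1))
      = -((x+1)^(n+1) - 1) := by
    have hneg : ∑ k ∈ range (n+1), -(((n+1).choose (k+1) : ℝ) * x^(k+1))
        = -(∑ k ∈ range (n+1), x^(k+1) * ((n+1).choose (k+1) : ℝ)) := by
      rw [← Finset.sum_neg_distrib]
      exact Finset.sum_congr rfl fun k _ => by ring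
    rw [hneg, hbin, Nat.choose_zero_right]
    push_cast
    ring
  rw [hsum]
  have hx1 : x + 1 = -((1-α)/α) := by rw [hx]; field_simp; ring
  rw [hx1, neg_pow, pow_succ _ n, pow_succ _ n]
  ring

lemma integral_weight_lag_sq (n : ℕ) :
    ∫ t in Ioi (0:ℝ), t * Real.exp (-t) * (lag n t)^2 = (n:ℝ) + 1 := by
  have hfun : (fun t : ℝ => t * Real.exp (-t) * (lag n t)^2)
      = fun t => ∑ k ∈ range (n+1), ∑ j ∈ range (n+1),
          (dd n k * dd n j) * (t^(k+j+1) * Real.exp (-(1*t))) := by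
    funext t
    rw [lag_eq, sq, Finset.sum_mul_sum, Finset.mul_sum]
    refine Finset.sum_congr rfl fun k _ => ?_
    rw [Finset.mul_sum]
    refine Finset.sum_congr rfl fun j _ => ?_
    simp only [one_mul]
    ring
  rw [hfun, integral_finset_sum _ (fun k _ => integrable_finset_sum _
    (fun j _ => ((integrableOn_pow_mul_exp 1 one_pos (k+j+1)).const_mul _)))]
  have hswap : ∀ k ∈ range (n+1),
      ∫ t in Ioi (0:ℝ), ∑ j ∈ range (n+1), (dd n k * dd n j) * (t^(k+j+1) * Real.exp (-(1*t)))
        = ∑ j ∈ range (n+1), (dd n k * dd n j) * ((k+j+1).factorial : ℝ) := by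
    intro k _
    rw [integral_finset_sum _ (fun j _ => ((integrableOn_pow_mul_exp 1 one_pos (k+j+1)).const_mul _))]
    refine Finset.sum_congr rfl fun j _ => ?_
    rw [MeasureTheory.integral_const_mul, integral_pow_mul_exp 1 one_pos (k+j+1), one_pow, div_one]
  rw [Finset.sum_congr rfl hswap]
  have hinner : ∀ k ∈ range (n+1),
      ∑ j ∈ range (n+1), (dd n k * dd n j) * ((k+j+1).factorial : ℝ)
        = dd n k * (if k = n then (-1:ℝ)^n * ((n+1).factorial : ℝ) else 0) := by
    intro k hk
    have hV := Vsum n k (by simpa using Nat.lt_succ_iff.mp (Finset.mem_range.mp hk))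
    rw [← hV, Finset.mul_sum]
    refine Finset.sum_congr rfl fun j _ => ?_
    rw [dd, dd, show j+k+1 = k+j+1 by omega]
    have hjf : (j.factorial : ℝ) ≠ 0 := by exact_mod_cast (Nat.factorial_pos j).ne'
    field_simp
  rw [Finset.sum_congr rfl hinner,
    Finset.sum_eq_single_of_mem n (Finset.self_mem_range_succ n)
      (fun k _ hkn => by rw [if_neg hkn, mul_zero])]
  rw [if_pos rfl, dd, Nat.choose_self, Nat.factorial_succ]
  have hnf : (n.factorial : ℝ) ≠ 0 := by exact_mod_cast (Nat.factorial_pos n).ne'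
  have hsq : ((-1:ℝ)^n) * ((-1:ℝ)^n) = 1 := by rw [← mul_pow]; norm_num
  push_cast
  field_simp
  linear_combination hsq


lemma exp_lt_ratio {α : ℝ} (h0 : 0 < α) (h2 : α < 1/2) :
    Real.exp (2 - 4*α) < (1-α)/α := by
  set f : ℝ → ℝ := fun x => Real.log (1-x) - Real.log x + 4*x - 2 with hf
  have hderiv : ∀ x ∈ Ioo (0:ℝ) (1/2), HasDerivAt f (-(1/(1-x)) - 1/x + 4) x := by
    intro x hx
    have hx0 : x ≠ 0 := ne_of_gt hx.1
    have hx1 : 1 - x ≠ 0 := by have := hx.2; intro h; rw [sub_eq_zero] at h; rw [← h] at this; norm_num at this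
    have d1 : HasDerivAt (fun x : ℝ => Real.log (1-x)) (-(1/(1-x))) x := by
      have : HasDerivAt (fun x : ℝ => 1 - x) (-1) x := by
        simpa using (hasDerivAt_id x).const_sub 1
      convert this.log hx1 using 1; ring
    have d2 : HasDerivAt Real.log (1/x) x := by
      simpa [one_div] using Real.hasDerivAt_log hx0
    have d3 : HasDerivAt (fun x : ℝ => 4*x) 4 x := by
      simpa using (hasDerivAt_id x).const_mul (4:ℝ)
    simpa [hf] using ((d1.sub d2).add d3).sub_const 2
  have h1α : (0:ℝ) < 1 - α := by linarith
  have hcont : ContinuousOn f (Icc α (1/2)) := by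
    refine ContinuousOn.sub (ContinuousOn.add (ContinuousOn.sub ?_ ?_) ?_) continuousOn_const
    · refine ContinuousOn.log (continuousOn_const.sub continuousOn_id) (fun x hx => ?_)
      have := hx.2; intro h; rw [sub_eq_zero] at h; rw [← h] at this
      norm_num at this
    · exact ContinuousOn.log continuousOn_id (fun x hx => ne_of_gt (lt_of_lt_of_le h0 hx.1))
    · exact continuousOn_const.mul continuousOn_id
  have hanti : StrictAntiOn f (Icc α (1/2)) := by
    refine strictAntiOn_of_deriv_neg (convex_Icc _ _) hcont (fun x hx => ?_)
    rw [interior_Icc] at hx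
    have hx' : x ∈ Ioo (0:ℝ) (1/2) := ⟨h0.trans hx.1, hx.2⟩
    rw [(hderiv x hx').deriv]
    have hx0 : (0:ℝ) < x := hx'.1
    have hx1 : (0:ℝ) < 1 - x := by have := hx'.2; linarith
    have hxx : (0:ℝ) < x * (1-x) := mul_pos hx0 hx1
    have hne : (2*x - 1) ≠ 0 := by have := hx'.2; intro h; rw [sub_eq_zero] at h; linarith
    have hsq : (0:ℝ) < (2*x-1)^2 := by positivity
    have h4 : 4 * (x*(1-x)) < 1 := by nlinarith [hsq]
    have hlt : 4 < 1/(x*(1-x)) := (lt_div_iff₀ hxx).mpr (by linarith)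
    have hsplit : 1/(x*(1-x)) = 1/x + 1/(1-x) := by
      field_simp
      ring
    rw [hsplit] at hlt
    linarith
  have hmem1 : α ∈ Icc α (1/2:ℝ) := ⟨le_rfl, h2.le⟩
  have hmem2 : (1/2:ℝ) ∈ Icc α (1/2:ℝ) := ⟨h2.le, le_rfl⟩
  have hgt := hanti hmem1 hmem2 h2
  have hf12 : f (1/2) = 0 := by
    simp only [hf]
    norm_num
  rw [hf12] at hgt
  have hlog : 2 - 4*α < Real.log (1-α) - Real.log α := by
    simp only [hf] at hgt
    linarith
  calc Real.exp (2 - 4*α) < Real.exp (Real.log (1-α) - Real.log α) := Real.exp_lt_exp.mpr hlog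
    _ = (1-α)/α := by rw [Real.exp_sub, Real.exp_log h1α, Real.exp_log h0]




lemma dd_abs_sum_le (n : ℕ) :
    ∑ k ∈ range (n+1), |dd n k| ≤ ((n:ℝ)+1) * Real.exp (2 * Real.sqrt ((n:ℝ)+1)) := by
  set s := Real.sqrt ((n:ℝ)+1) with hsdef
  have hs0 : 0 ≤ s := Real.sqrt_nonneg _
  have hs2 : s^2 = (n:ℝ)+1 := Real.sq_sqrt (by positivity)
  have step1 : ∀ k ∈ range (n+1), |dd n k| ≤ ((n:ℝ)+1) * (s^k / (k.factorial : ℝ))^2 := by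
    intro k _
    have hkf : (0:ℝ) < (k.factorial : ℝ) := by exact_mod_cast k.factorial_pos
    have hkf1 : (0:ℝ) < ((k+1).factorial : ℝ) := by exact_mod_cast (k+1).factorial_pos
    have h1 : |dd n k| = ((n+1).choose (k+1) : ℝ) / (k.factorial : ℝ) := by
      rw [dd, abs_div, abs_mul, abs_pow, abs_neg, abs_one, one_pow, mul_one,
        Nat.abs_cast, Nat.abs_cast]
    have h2 : ((n+1).choose (k+1) : ℝ) ≤ ((n:ℝ)+1)^(k+1) / ((k+1).factorial : ℝ) := by
      have := Nat.choose_le_pow_div (α := ℝ) (k+1) (n+1)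
      push_cast at this ⊢
      exact this
    rw [h1]
    calc ((n+1).choose (k+1) : ℝ) / (k.factorial : ℝ)
        ≤ (((n:ℝ)+1)^(k+1) / ((k+1).factorial : ℝ)) / (k.factorial : ℝ) :=
          div_le_div_of_nonneg_right h2 hkf.le
      _ ≤ (((n:ℝ)+1)^(k+1) / (k.factorial : ℝ)) / (k.factorial : ℝ) := by
          refine div_le_div_of_nonneg_right ?_ hkf.le
          refine div_le_div_of_nonneg_left (by positivity) hkf ?_
          exact_mod_cast Nat.factorial_le (Nat.le_succ k)
      _ = ((n:ℝ)+1) * (s^k / (k.factorial : ℝ))^2 := by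
          rw [div_pow, ← pow_mul, mul_comm k 2, pow_mul, hs2, pow_succ]
          ring
  calc ∑ k ∈ range (n+1), |dd n k|
      ≤ ∑ k ∈ range (n+1), ((n:ℝ)+1) * (s^k / (k.factorial : ℝ))^2 :=
        Finset.sum_le_sum step1
    _ = ((n:ℝ)+1) * ∑ k ∈ range (n+1), (s^k / (k.factorial : ℝ))^2 := by
        rw [Finset.mul_sum]
    _ ≤ ((n:ℝ)+1) * (∑ k ∈ range (n+1), s^k / (k.factorial : ℝ))^2 := by
        refine mul_le_mul_of_nonneg_left ?_ (by positivity)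
        exact Finset.sum_sq_le_sq_sum_of_nonneg (fun k _ => by positivity)
    _ ≤ ((n:ℝ)+1) * (Real.exp s)^2 := by
        refine mul_le_mul_of_nonneg_left ?_ (by positivity)
        refine pow_le_pow_left₀ (by positivity) ?_ 2
        exact Real.sum_le_exp_of_nonneg hs0 (n+1)
    _ = ((n:ℝ)+1) * Real.exp (2*s) := by
        rw [sq, ← Real.exp_add, two_mul]

lemma aux_lim {y : ℝ} (h0 : 0 ≤ y) (h1 : y < 1) :
    Tendsto (fun n : ℕ => ((n:ℝ)+1) * y^(n+1)) atTop (nhds 0) := by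
  have hs : Summable (fun n : ℕ => (n:ℝ)^1 * y^n) :=
    summable_pow_mul_geometric_of_norm_lt_one 1 (by rwa [Real.norm_eq_abs, abs_of_nonneg h0])
  have h2 := hs.tendsto_atTop_zero.comp (tendsto_add_atTop_nat 1)
  have : (fun n : ℕ => ((n:ℝ)+1) * y^(n+1)) = (fun n : ℕ => (n:ℝ)^1 * y^n) ∘ (· + 1) := by
    funext n; simp only [Function.comp, pow_one]; push_cast; ring
  rw [this]
  exact h2

lemma amgm_bound {α lam t L : ℝ} (hα0 : 0 < α) (hα2 : α < 1/2) (hlam : 0 < lam) (ht : 1 ≤ t) :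
    Real.exp (-(α*t)) * |L| ≤ (lam/2) * (t * Real.exp (-t) * L^2)
      + (1/(2*lam)) * Real.exp ((1-2*α)*t) := by
  have ht0 : (0:ℝ) < t := lt_of_lt_of_le one_pos ht
  set a := Real.sqrt (t * Real.exp (-t)) * |L| with ha
  set b := Real.exp ((1-2*α)*t/2) with hb
  have ha0 : 0 ≤ a := by positivity
  have hb0 : 0 < b := Real.exp_pos _
  have ha2 : a^2 = t * Real.exp (-t) * L^2 := by
    rw [ha, mul_pow, Real.sq_sqrt (by positivity), sq_abs]
  have hb2 : b^2 = Real.exp ((1-2*α)*t) := by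
    rw [hb, sq, ← Real.exp_add]
    ring_nf
  have hab : Real.exp (-(α*t)) * |L| ≤ a * b := by
    have hsq : Real.sqrt (t * Real.exp (-t)) = Real.sqrt t * Real.exp (-t/2) := by
      rw [Real.sqrt_mul ht0.le, Real.exp_half]
    have h1t : 1 ≤ Real.sqrt t := by
      rw [show (1:ℝ) = Real.sqrt 1 by rw [Real.sqrt_one]]
      exact Real.sqrt_le_sqrt ht
    have hexp : Real.exp (-(α*t)) = Real.exp (-t/2) * b := by
      rw [hb, ← Real.exp_add]
      congr 1
      ring
    rw [hexp, ha, hsq]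
    calc Real.exp (-t/2) * b * |L| = 1 * (Real.exp (-t/2) * |L| * b) := by ring
      _ ≤ Real.sqrt t * (Real.exp (-t/2) * |L| * b) := by
          refine mul_le_mul_of_nonneg_right h1t (by positivity)
      _ = (Real.sqrt t * Real.exp (-t/2)) * |L| * b := by ring
  have key : a * b ≤ (lam/2) * a^2 + (1/(2*lam)) * b^2 := by
    rw [← sub_nonneg]
    have : (lam/2) * a^2 + (1/(2*lam)) * b^2 - a*b = (lam*a - b)^2 / (2*lam) := by
      field_simp
      ring
    rw [this]
    positivity
  calc Real.exp (-(α*t)) * |L| ≤ a * b := hab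
    _ ≤ (lam/2) * a^2 + (1/(2*lam)) * b^2 := key
    _ = _ := by rw [ha2, hb2]



-- key quantitative bounds for a single n
lemma key_bounds {α : ℝ} (hα0 : 0 < α) (hα2 : α < 1/2) (n : ℕ) :
    ((1-α)/α)^(n+1) - 1 ≤ (∫ t in Ioi (0:ℝ), Real.exp (-(α * t)) * |lag n t|) ∧
    (∫ t in Ioi (0:ℝ), Real.exp (-(α * t)) * |lag n t|)
      ≤ ((1-α)/α)^(n+1) + 1
        + 2*(((n:ℝ)+1) * Real.exp (2 * Real.sqrt ((n:ℝ)+1))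
             + 3*((n:ℝ)+1) * (Real.exp (2-4*α))^(n+1)) := by
  have hr1 : 1 < (1-α)/α := by rw [lt_div_iff₀ hα0]; linarith
  have hr0 : 0 < (1-α)/α := lt_trans one_pos hr1
  set r : ℝ := (1-α)/α with hrdef
  set R : ℝ := r^(n+1) with hRdef
  have hRpos : 0 < R := pow_pos hr0 _
  have hR1 : 1 ≤ R := one_le_pow₀ hr1.le
  set M : ℝ := 4*((n:ℝ)+1) with hM
  have hM1 : (1:ℝ) ≤ M := by rw [hM]; have : (0:ℝ) ≤ (n:ℝ) := Nat.cast_nonneg n; linarith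
  have hM0 : (0:ℝ) ≤ M := le_trans zero_le_one hM1
  set fabs : ℝ → ℝ := fun t => Real.exp (-(α * t)) * |lag n t| with hfabs
  set fsgn : ℝ → ℝ := fun t => Real.exp (-(α * t)) * lag n t with hfsgn
  have hfa : IntegrableOn fabs (Ioi 0) := integrableOn_exp_mul_lag_abs α hα0 n
  have hfs : IntegrableOn fsgn (Ioi 0) := integrableOn_exp_mul_lag α hα0 n
  have hnorm_eq : ∀ t : ℝ, ‖fsgn t‖ = fabs t := fun t => by
    rw [hfsgn, hfabs, Real.norm_eq_abs, abs_mul, abs_of_pos (Real.exp_pos _)]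
  have hA : ∫ t in Ioi (0:ℝ), fsgn t = 1 + (-1)^n * R := integral_exp_lag hα0 n
  -- |A| bounds
  have habs : R - 1 ≤ |1 + (-1)^n * R| ∧ |1 + (-1)^n * R| ≤ R + 1 := by
    rcases Nat.even_or_odd n with he | ho
    · rw [he.neg_one_pow, one_mul, abs_of_pos (by linarith)]
      constructor <;> linarith
    · rw [ho.neg_one_pow, neg_one_mul, ← sub_eq_add_neg, abs_sub_comm,
        abs_of_nonneg (by linarith)]
      constructor <;> linarith
  -- lower bound
  have hlow : R - 1 ≤ ∫ t in Ioi (0:ℝ), fabs t := by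
    have h1 := norm_integral_le_integral_norm (μ := volume.restrict (Ioi 0)) fsgn
    rw [show (fun t => ‖fsgn t‖) = fabs from funext hnorm_eq] at h1
    rw [hA, Real.norm_eq_abs] at h1
    exact le_trans habs.1 h1
  -- splitting
  have hsub1 : Ioc (0:ℝ) M ⊆ Ioi 0 := Ioc_subset_Ioi_self
  have hsub2 : Ioi M ⊆ Ioi (0:ℝ) := Ioi_subset_Ioi hM0
  have hsplit : ∀ g : ℝ → ℝ, IntegrableOn g (Ioi 0) →
      ∫ t in Ioi (0:ℝ), g t = (∫ t in Ioc (0:ℝ) M, g t) + ∫ t in Ioi M, g t := by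
    intro g hg
    rw [← Ioc_union_Ioi_eq_Ioi hM0]
    exact setIntegral_union (Ioc_disjoint_Ioi le_rfl) measurableSet_Ioi
      (hg.mono_set hsub1) (hg.mono_set hsub2)
  -- tail sign
  have htail : ∫ t in Ioi M, fabs t = (-1)^n * ∫ t in Ioi M, fsgn t := by
    rw [← integral_const_mul]
    refine setIntegral_congr_fun measurableSet_Ioi (fun t ht => ?_)
    have hp := (lag_sign n).1 t (le_of_lt ht)
    have habs' : |lag n t| = (-1)^n * lag n t := by
      have : |(-1:ℝ)^n * lag n t| = |lag n t| := by
        rw [abs_mul, abs_pow, abs_neg, abs_one, one_pow, one_mul]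
      rw [← this, abs_of_pos hp]
    rw [hfabs, hfsgn]
    simp only
    rw [habs']
    ring
  -- |∫_{Ioc} fsgn| ≤ En
  have hmid : |∫ t in Ioc (0:ℝ) M, fsgn t| ≤ ∫ t in Ioc (0:ℝ) M, fabs t := by
    have h1 := norm_integral_le_integral_norm (μ := volume.restrict (Ioc 0 M)) fsgn
    rw [show (fun t => ‖fsgn t‖) = fabs from funext hnorm_eq, Real.norm_eq_abs] at h1
    exact h1
  -- upper bound skeleton
  have hup : ∫ t in Ioi (0:ℝ), fabs t
      ≤ R + 1 + 2 * ∫ t in Ioc (0:ℝ) M, fabs t := by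
    have h1 := hsplit fabs hfa
    have h2 := hsplit fsgn hfs
    have h3 : ∫ t in Ioi M, fsgn t
        = (1 + (-1)^n * R) - ∫ t in Ioc (0:ℝ) M, fsgn t := by rw [← hA]; linarith
    have h4 : (-1:ℝ)^n * ((1 + (-1)^n * R) - ∫ t in Ioc (0:ℝ) M, fsgn t)
        ≤ |1 + (-1)^n * R| + |∫ t in Ioc (0:ℝ) M, fsgn t| := by
      have e1 : (-1:ℝ)^n * ((1 + (-1)^n * R) - ∫ t in Ioc (0:ℝ) M, fsgn t)
          ≤ |(-1:ℝ)^n * ((1 + (-1)^n * R) - ∫ t in Ioc (0:ℝ) M, fsgn t)| := le_abs_self _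
      have e2 : |(-1:ℝ)^n * ((1 + (-1)^n * R) - ∫ t in Ioc (0:ℝ) M, fsgn t)|
          = |(1 + (-1)^n * R) - ∫ t in Ioc (0:ℝ) M, fsgn t| := by
        rw [abs_mul, abs_pow, abs_neg, abs_one, one_pow, one_mul]
      calc (-1:ℝ)^n * ((1 + (-1)^n * R) - ∫ t in Ioc (0:ℝ) M, fsgn t)
          ≤ |(1 + (-1)^n * R) - ∫ t in Ioc (0:ℝ) M, fsgn t| := e2 ▸ e1
        _ ≤ |1 + (-1)^n * R| + |∫ t in Ioc (0:ℝ) M, fsgn t| := abs_sub _ _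
    rw [h1, htail, h3]
    have := habs.2
    linarith [hmid, h4]
  -- bound the middle integral En
  have hEsplit : ∫ t in Ioc (0:ℝ) M, fabs t
      = (∫ t in Ioc (0:ℝ) 1, fabs t) + ∫ t in Ioc (1:ℝ) M, fabs t := by
    rw [← Ioc_union_Ioc_eq_Ioc (by norm_num : (0:ℝ) ≤ 1) hM1]
    exact setIntegral_union (Ioc_disjoint_Ioc_of_le le_rfl) measurableSet_Ioc
      (hfa.mono_set Ioc_subset_Ioi_self)
      (hfa.mono_set (Set.Ioc_subset_Ioi_self.trans (Ioi_subset_Ioi zero_le_one)))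
  have hE1 : ∫ t in Ioc (0:ℝ) 1, fabs t
      ≤ ((n:ℝ)+1) * Real.exp (2 * Real.sqrt ((n:ℝ)+1)) := by
    set K := ((n:ℝ)+1) * Real.exp (2 * Real.sqrt ((n:ℝ)+1)) with hKdef
    have hconst : IntegrableOn (fun _ : ℝ => K) (Ioc (0:ℝ) 1) :=
      integrableOn_const measure_Ioc_lt_top.ne
    have hpt : ∀ t ∈ Ioc (0:ℝ) 1, fabs t ≤ K := by
      intro t ht
      have hexp1 : Real.exp (-(α*t)) ≤ 1 := by
        rw [Real.exp_le_one_iff]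
        have : 0 ≤ α * t := le_of_lt (mul_pos hα0 ht.1)
        linarith
      calc fabs t ≤ |lag n t| := mul_le_of_le_one_left (abs_nonneg _) hexp1
        _ ≤ ∑ k ∈ range (n+1), |dd n k| * t^k := lag_abs_le n t ht.1.le
        _ ≤ ∑ k ∈ range (n+1), |dd n k| := by
            refine Finset.sum_le_sum fun k _ => ?_
            calc |dd n k| * t^k ≤ |dd n k| * 1 :=
                  mul_le_mul_of_nonneg_left (pow_le_one₀ ht.1.le ht.2) (abs_nonneg _)
              _ = |dd n k| := mul_one _
        _ ≤ K := dd_abs_sum_le n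
    calc ∫ t in Ioc (0:ℝ) 1, fabs t ≤ ∫ _ in Ioc (0:ℝ) 1, K :=
          setIntegral_mono_on (hfa.mono_set Ioc_subset_Ioi_self) hconst measurableSet_Ioc hpt
      _ = K := by
          rw [setIntegral_const, Real.volume_real_Ioc]
          norm_num
  have hE2 : ∫ t in Ioc (1:ℝ) M, fabs t
      ≤ 3*((n:ℝ)+1) * (Real.exp (2-4*α))^(n+1) := by
    set lam : ℝ := Real.exp ((1-2*α)*M/2) with hlamdef
    have hlam0 : 0 < lam := Real.exp_pos _
    set w : ℝ → ℝ := fun t => t * Real.exp (-t) * (lag n t)^2 with hw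
    have hsubw : Ioc (1:ℝ) M ⊆ Ioi (0:ℝ) :=
      Set.Ioc_subset_Ioi_self.trans (Ioi_subset_Ioi zero_le_one)
    have hw_int : IntegrableOn w (Ioc (1:ℝ) M) :=
      (integrableOn_weight_lag_sq n).mono_set hsubw
    have hexp_int : IntegrableOn (fun t : ℝ => Real.exp ((1-2*α)*t)) (Ioc (1:ℝ) M) :=
      (Real.continuous_exp.comp (continuous_const.mul continuous_id)).integrableOn_Ioc
    have hstep1 : ∫ t in Ioc (1:ℝ) M, fabs t
        ≤ ∫ t in Ioc (1:ℝ) M, ((lam/2) * w t + (1/(2*lam)) * Real.exp ((1-2*α)*t)) := by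
      refine setIntegral_mono_on (hfa.mono_set hsubw)
        ((hw_int.const_mul _).add (hexp_int.const_mul _)) measurableSet_Ioc ?_
      intro t ht
      exact amgm_bound hα0 hα2 hlam0 ht.1.le
    have hstep2 : ∫ t in Ioc (1:ℝ) M, ((lam/2) * w t + (1/(2*lam)) * Real.exp ((1-2*α)*t))
        = (lam/2) * (∫ t in Ioc (1:ℝ) M, w t)
          + (1/(2*lam)) * ∫ t in Ioc (1:ℝ) M, Real.exp ((1-2*α)*t) := by
      rw [integral_add (hw_int.const_mul _) (hexp_int.const_mul _),
        integral_const_mul, integral_const_mul]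
    have hstep3 : ∫ t in Ioc (1:ℝ) M, w t ≤ (n:ℝ)+1 := by
      have hnn : 0 ≤ᵐ[volume.restrict (Ioi (0:ℝ))] w := by
        filter_upwards [ae_restrict_mem measurableSet_Ioi] with t ht
        have ht' : (0:ℝ) < t := ht
        rw [hw]
        positivity
      have := setIntegral_mono_set (integrableOn_weight_lag_sq n) hnn
        (HasSubset.Subset.eventuallyLE hsubw)
      rwa [integral_weight_lag_sq n] at this
    have hstep4 : ∫ t in Ioc (1:ℝ) M, Real.exp ((1-2*α)*t) ≤ Real.exp ((1-2*α)*M) * M := by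
      have hconst : IntegrableOn (fun _ : ℝ => Real.exp ((1-2*α)*M)) (Ioc (1:ℝ) M) :=
        integrableOn_const measure_Ioc_lt_top.ne
      calc ∫ t in Ioc (1:ℝ) M, Real.exp ((1-2*α)*t)
          ≤ ∫ _ in Ioc (1:ℝ) M, Real.exp ((1-2*α)*M) := by
            refine setIntegral_mono_on hexp_int hconst measurableSet_Ioc (fun t ht => ?_)
            refine Real.exp_le_exp.mpr ?_
            refine mul_le_mul_of_nonneg_left ht.2 (by linarith)
        _ = (M - 1) * Real.exp ((1-2*α)*M) := by
            rw [setIntegral_const, Real.volume_real_Ioc, smul_eq_mul,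
              max_eq_left (by linarith)]
        _ ≤ Real.exp ((1-2*α)*M) * M := by
            have := Real.exp_pos ((1-2*α)*M)
            nlinarith
    have hlamsq : Real.exp ((1-2*α)*M) = lam^2 := by
      rw [hlamdef, sq, ← Real.exp_add]
      congr 1
      ring
    have hlam_eq : lam = (Real.exp (2-4*α))^(n+1) := by
      rw [hlamdef, show (1-2*α)*M/2 = ((n+1 : ℕ):ℝ)*(2-4*α) by rw [hM]; push_cast; ring,
        Real.exp_nat_mul]
    have hfinal : ∫ t in Ioc (1:ℝ) M, fabs t ≤ (lam/2) * ((n:ℝ)+1) + (lam/2) * M := by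
      have h5 : (1/(2*lam)) * (Real.exp ((1-2*α)*M) * M) = (lam/2) * M := by
        rw [hlamsq]
        field_simp
      have h6 : (1/(2*lam)) * (∫ t in Ioc (1:ℝ) M, Real.exp ((1-2*α)*t))
          ≤ (lam/2) * M := by
        rw [← h5]
        refine mul_le_mul_of_nonneg_left hstep4 (by positivity)
      have h7 : (lam/2) * (∫ t in Ioc (1:ℝ) M, w t) ≤ (lam/2) * ((n:ℝ)+1) :=
        mul_le_mul_of_nonneg_left hstep3 (by positivity)
      calc ∫ t in Ioc (1:ℝ) M, fabs t
          ≤ _ := hstep1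
        _ = _ := hstep2
        _ ≤ (lam/2) * ((n:ℝ)+1) + (lam/2) * M := add_le_add h7 h6
    calc ∫ t in Ioc (1:ℝ) M, fabs t ≤ (lam/2) * ((n:ℝ)+1) + (lam/2) * M := hfinal
      _ ≤ 3*((n:ℝ)+1) * lam := by
          rw [hM]
          nlinarith [hlam0, Nat.cast_nonneg (α := ℝ) n]
      _ = 3*((n:ℝ)+1) * (Real.exp (2-4*α))^(n+1) := by rw [hlam_eq]
  constructor
  · exact hlow
  · calc ∫ t in Ioi (0:ℝ), fabs t
        ≤ R + 1 + 2 * ∫ t in Ioc (0:ℝ) M, fabs t := hup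
      _ ≤ R + 1 + 2*(((n:ℝ)+1) * Real.exp (2 * Real.sqrt ((n:ℝ)+1))
           + 3*((n:ℝ)+1) * (Real.exp (2-4*α))^(n+1)) := by
          rw [hEsplit]
          linarith [hE1, hE2]

/-- For fixed `α ∈ (0,1/2)`,
`∫_0^∞ e^{-αt}|L_n^{(1)}(t)| dt ∼ ((1-α)/α)^{n+1}` as `n → ∞`. -/
theorem integral_exp_abs_lag_asymptotic (α : ℝ) (hα : α ∈ Set.Ioo (0 : ℝ) (1 / 2)) :
    Tendsto
      (fun n : ℕ =>
        (∫ t in Set.Ioi (0 : ℝ), Real.exp (-(α * t)) * |lag n t|) / ((1 - α) / α) ^ (n + 1))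
      atTop (nhds 1) := by
  obtain ⟨hα0, hα2⟩ := hα
  have hα2' : α < 1/2 := hα2
  have hr1 : 1 < (1-α)/α := by rw [lt_div_iff₀ hα0]; linarith
  have hr0 : 0 < (1-α)/α := lt_trans one_pos hr1
  set r : ℝ := (1-α)/α with hrdef
  set q : ℝ := Real.exp (2-4*α) with hqdef
  have hq0 : 0 < q := Real.exp_pos _
  have hqr : q < r := exp_lt_ratio hα0 hα2'
  set x : ℝ := r⁻¹ with hxdef
  have hx0 : 0 ≤ x := by positivity
  have hx1 : x < 1 := inv_lt_one_of_one_lt₀ hr1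
  have hxlim : Tendsto (fun n : ℕ => x^(n+1)) atTop (nhds 0) :=
    (tendsto_pow_atTop_nhds_zero_of_lt_one hx0 hx1).comp (tendsto_add_atTop_nat 1)
  have hKlim : Tendsto
      (fun n : ℕ => (((n:ℝ)+1) * Real.exp (2*Real.sqrt ((n:ℝ)+1))) * x^(n+1))
      atTop (nhds 0) := by
    set δ : ℝ := Real.log r / 2 with hδ
    have hδ0 : 0 < δ := by rw [hδ]; have := Real.log_pos hr1; linarith
    set w : ℝ := (Real.sqrt r)⁻¹ with hwdef
    have hsr1 : 1 < Real.sqrt r := by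
      rw [show (1:ℝ) = Real.sqrt 1 by rw [Real.sqrt_one]]
      exact Real.sqrt_lt_sqrt zero_le_one hr1
    have hw0 : 0 ≤ w := by positivity
    have hw1 : w < 1 := inv_lt_one_of_one_lt₀ hsr1
    have hsqr : Real.exp δ = Real.sqrt r := by
      rw [hδ, Real.exp_half, Real.exp_log hr0]
    have hwexp : w = Real.exp (-δ) := by
      rw [hwdef, ← hsqr, Real.exp_neg]
    have hx_ww : x = w * w := by
      rw [hxdef, show r = Real.sqrt r * Real.sqrt r from (Real.mul_self_sqrt hr0.le).symm,
        mul_inv, hwdef]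
    have hbound : ∀ n : ℕ, (((n:ℝ)+1) * Real.exp (2*Real.sqrt ((n:ℝ)+1))) * x^(n+1)
        ≤ Real.exp (1/δ) * (((n:ℝ)+1) * w^(n+1)) := by
      intro n
      set s : ℝ := Real.sqrt ((n:ℝ)+1) with hs
      have hs0 : 0 ≤ s := Real.sqrt_nonneg _
      have hs2 : s^2 = (n:ℝ)+1 := Real.sq_sqrt (by positivity)
      have hamgm : 2*s ≤ δ*((n:ℝ)+1) + 1/δ := by
        rw [← hs2]
        have h2 : 2*s - δ*s^2 ≤ 1/δ := by
          rw [le_div_iff₀ hδ0]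
          nlinarith [sq_nonneg (δ*s - 1)]
        linarith
      have hwpow : w^(n+1) = Real.exp (-(δ*(((n:ℕ)+1:ℕ):ℝ))) := by
        rw [hwexp, ← Real.exp_nat_mul]
        congr 1
        push_cast
        ring
      have hexp_le : Real.exp (2*s) * w^(n+1) ≤ Real.exp (1/δ) := by
        rw [hwpow, ← Real.exp_add]
        refine Real.exp_le_exp.mpr ?_
        push_cast
        linarith
      calc (((n:ℝ)+1) * Real.exp (2*s)) * x^(n+1)
          = ((n:ℝ)+1) * ((Real.exp (2*s) * w^(n+1)) * w^(n+1)) := by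
            rw [hx_ww, mul_pow]
            ring
        _ ≤ ((n:ℝ)+1) * (Real.exp (1/δ) * w^(n+1)) := by
            refine mul_le_mul_of_nonneg_left ?_ (by positivity)
            refine mul_le_mul_of_nonneg_right hexp_le (by positivity)
        _ = Real.exp (1/δ) * (((n:ℝ)+1) * w^(n+1)) := by ring
    refine squeeze_zero (fun n => by positivity) hbound ?_
    have := (aux_lim hw0 hw1).const_mul (Real.exp (1/δ))
    simpa using this
  have hLlim : Tendsto (fun n : ℕ => (3*((n:ℝ)+1) * q^(n+1)) * x^(n+1)) atTop (nhds 0) := by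
    have hqx0 : 0 ≤ q*x := by positivity
    have hqx1 : q*x < 1 := by
      rw [hxdef, ← div_eq_mul_inv, div_lt_one hr0]
      exact hqr
    have h3 := (aux_lim hqx0 hqx1).const_mul (3:ℝ)
    have heq : (fun n : ℕ => (3*((n:ℝ)+1) * q^(n+1)) * x^(n+1))
        = fun n : ℕ => 3*(((n:ℝ)+1) * (q*x)^(n+1)) := by
      funext n
      rw [mul_pow]
      ring
    rw [heq]
    simpa using h3
  have hlow_lim : Tendsto (fun n : ℕ => (r^(n+1) - 1)/r^(n+1)) atTop (nhds 1) := by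
    have heq : (fun n : ℕ => (r^(n+1) - 1)/r^(n+1)) = fun n : ℕ => 1 - x^(n+1) := by
      funext n
      have hRn : r^(n+1) ≠ 0 := (pow_pos hr0 _).ne'
      rw [sub_div, div_self hRn, one_div, hxdef, inv_pow]
    rw [heq]
    simpa using tendsto_const_nhds.sub hxlim
  have hup_lim : Tendsto (fun n : ℕ =>
      (r^(n+1) + 1 + 2*((((n:ℝ)+1) * Real.exp (2*Real.sqrt ((n:ℝ)+1)))
        + 3*((n:ℝ)+1) * q^(n+1)))/r^(n+1)) atTop (nhds 1) := by
    have heq : (fun n : ℕ =>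
        (r^(n+1) + 1 + 2*((((n:ℝ)+1) * Real.exp (2*Real.sqrt ((n:ℝ)+1)))
          + 3*((n:ℝ)+1) * q^(n+1)))/r^(n+1))
        = fun n : ℕ => 1 + (x^(n+1)
            + 2*(((((n:ℝ)+1) * Real.exp (2*Real.sqrt ((n:ℝ)+1)))) * x^(n+1)
              + (3*((n:ℝ)+1) * q^(n+1)) * x^(n+1))) := by
      funext n
      have hRn : r^(n+1) ≠ 0 := (pow_pos hr0 _).ne'
      have hxR : x^(n+1) = (r^(n+1))⁻¹ := by rw [hxdef, inv_pow]
      rw [hxR]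
      field_simp
      ring
    rw [heq]
    have := tendsto_const_nhds (α := ℕ) (f := atTop) (x := (1:ℝ)) |>.add
      (hxlim.add ((hKlim.add hLlim).const_mul (2:ℝ)))
    simpa using this
  refine tendsto_of_tendsto_of_tendsto_of_le_of_le hlow_lim hup_lim ?_ ?_
  · intro n
    exact div_le_div_of_nonneg_right (key_bounds hα0 hα2' n).1 (pow_pos hr0 _).le |>.trans_eq rfl
  · intro n
    exact div_le_div_of_nonneg_right (key_bounds hα0 hα2' n).2 (pow_pos hr0 _).le |>.trans_eq rfl

end
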